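/- The Gaussian tail function Φ satisfies the Bellman inequality beyond √3: for every x ≥ √3 and every τ ∈ (−1,1), Φ(x) ≥ (1/2)[Φ(X(x,−τ)) + Φ(X(x,τ))]. -/

import Mathlib

open MeasureTheory

noncomputable section

/-- The Gaussian tail function `Φ(x) = ∫ₓ^∞ e^{-y²/2} dy`. -/
def gaussPhi (x : ℝ) : ℝ := ∫ y in Set.Ioi x, Real.exp (-y ^ 2 / 2)

/-- `X(x,τ) = (x+τ)/√(1-τ²)`. -/
def XX (x t : ℝ) : ℝ := (x + t) / Real.sqrt (1 - t ^ 2)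

/-!
`F(τ) = Φ(X(x,-τ)) + Φ(X(x,τ))` is even with `F(0) = 2Φ(x)`, so it suffices that `F` is
antitone on `[0,1)`. With `u = xτ`,
`(1-τ²)^{3/2} F'(τ) = (1 - u) e^{-X(x,-τ)²/2} - (1 + u) e^{-X(x,τ)²/2}` and
`X(x,-τ)² = X(x,τ)² - 4u/(1-τ²)`, so `F' ≤ 0` reads `(1 - u) e^{2u/(1-τ²)} ≤ 1 + u`.
For `x ≥ √3` we have `3τ² ≤ u²`, hence `2u/(1-τ²) ≤ 6u/(3-u²) ≤ log((1+u)/(1-u))`.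
-/

open Real Set

lemma integrable_exp_neg_sq_div_two : Integrable fun y : ℝ => exp (-y ^ 2 / 2) := by
  convert integrable_exp_neg_mul_sq (b := 1 / 2) (by norm_num) using 3
  ring

lemma hasDerivAt_gaussPhi (x : ℝ) : HasDerivAt gaussPhi (-exp (-x ^ 2 / 2)) x := by
  have hΦ : gaussPhi = fun u => gaussPhi 0 - ∫ y in (0 : ℝ)..u, exp (-y ^ 2 / 2) := by
    funext u
    rw [gaussPhi, gaussPhi, ← intervalIntegral.integral_Ioi_sub_Ioi'
      integrable_exp_neg_sq_div_two.integrableOn integrable_exp_neg_sq_div_two.integrableOn]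
    ring
  rw [hΦ]
  exact ((by fun_prop : Continuous fun y : ℝ => exp (-y ^ 2 / 2)).integral_hasStrictDerivAt
    0 x).hasDerivAt.const_sub _

-- Compare termwise `2u/(1 - u²/3) = 2 ∑ u^(2k+1)/3^k` with
-- `log((1+u)/(1-u)) = 2 ∑ u^(2k+1)/(2k+1)`, using `2k + 1 ≤ 3^k`.
lemma six_mul_div_three_sub_sq_le_log_sub_log {u : ℝ} (hu0 : 0 ≤ u) (hu1 : u < 1) :
    6 * u / (3 - u ^ 2) ≤ log (1 + u) - log (1 - u) := by
  have hq : u ^ 2 / 3 < 1 := by nlinarith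
  have hgeom : HasSum (fun k : ℕ => 2 * (1 / 3 ^ k) * u ^ (2 * k + 1)) (6 * u / (3 - u ^ 2)) := by
    have hterm : (fun k : ℕ => 2 * (1 / 3 ^ k) * u ^ (2 * k + 1)) =
        fun k => 2 * u * (u ^ 2 / 3) ^ k := by
      funext k
      rw [pow_succ, pow_mul, div_pow]
      ring
    have hval : 6 * u / (3 - u ^ 2) = 2 * u * (1 - u ^ 2 / 3)⁻¹ := by
      field_simp
      ring
    rw [hterm, hval]
    exact (hasSum_geometric_of_lt_one (by positivity) hq).mul_left (2 * u)
  refine hasSum_le (fun k => ?_) hgeom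
    (hasSum_log_sub_log_of_abs_lt_one (by rwa [abs_of_nonneg hu0]))
  have hk : (2 * k + 1 : ℝ) ≤ 3 ^ k := by
    have := one_add_mul_le_pow (by norm_num : (-2 : ℝ) ≤ 2) k
    norm_num at this
    linarith
  gcongr

lemma one_sub_mul_exp_le_one_add {u s : ℝ} (hu0 : 0 ≤ u) (hu1 : u < 1)
    (hs : s ≤ 6 * u / (3 - u ^ 2)) : (1 - u) * exp s ≤ 1 + u := by
  have hs' : exp s ≤ (1 + u) / (1 - u) := by
    rw [← exp_log (by linarith : 0 < 1 + u), ← exp_log (by linarith : 0 < 1 - u), ← exp_sub]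
    exact exp_le_exp.2 (hs.trans (six_mul_div_three_sub_sq_le_log_sub_log hu0 hu1))
  rwa [← le_div_iff₀' (by linarith)]

lemma XX_zero (x : ℝ) : XX x 0 = x := by
  simp [XX]

lemma hasDerivAt_XX (x : ℝ) {t : ℝ} (ht : t ∈ Ioo (-1 : ℝ) 1) :
    HasDerivAt (XX x) ((1 + x * t) / √(1 - t ^ 2) ^ 3) t := by
  have ht' : 0 < 1 - t ^ 2 := by nlinarith [ht.1, ht.2]
  have hsq : √(1 - t ^ 2) ^ 2 = 1 - t ^ 2 := sq_sqrt ht'.le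
  have hden : HasDerivAt (fun s : ℝ => √(1 - s ^ 2)) (-(2 * t) / (2 * √(1 - t ^ 2))) t := by
    refine HasDerivAt.sqrt ?_ ht'.ne'
    simpa using (hasDerivAt_pow 2 t).const_sub 1
  refine (((hasDerivAt_id t).const_add x).div hden (sqrt_pos.2 ht').ne').congr_deriv ?_
  simp only [id]
  field_simp
  linear_combination hsq

lemma neg_sq_XX_neg_div_two (x : ℝ) {t : ℝ} (ht : 0 < 1 - t ^ 2) :
    -XX x (-t) ^ 2 / 2 = -XX x t ^ 2 / 2 + 2 * (x * t) / (1 - t ^ 2) := by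
  simp only [XX, div_pow, neg_sq, sq_sqrt ht.le]
  field_simp
  ring

lemma one_sub_mul_exp_XX_neg_le {x t : ℝ} (hx : √3 ≤ x) (ht0 : 0 ≤ t) (ht1 : t < 1) :
    (1 - x * t) * exp (-XX x (-t) ^ 2 / 2) ≤ (1 + x * t) * exp (-XX x t ^ 2 / 2) := by
  have hx0 : 0 ≤ x := (sqrt_nonneg 3).trans hx
  have hx3 : 3 ≤ x ^ 2 := by
    simpa using pow_le_pow_left₀ (sqrt_nonneg 3) hx 2
  have ht : 0 < 1 - t ^ 2 := by nlinarith
  have hu0 : 0 ≤ x * t := mul_nonneg hx0 ht0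
  rcases le_or_gt 1 (x * t) with hu1 | hu1
  · have : (1 - x * t) * exp (-XX x (-t) ^ 2 / 2) ≤ 0 :=
      mul_nonpos_of_nonpos_of_nonneg (by linarith) (exp_nonneg _)
    exact this.trans (by positivity)
  · have hexp : 2 * (x * t) / (1 - t ^ 2) ≤ 6 * (x * t) / (3 - (x * t) ^ 2) := by
      rw [div_le_div_iff₀ ht (by nlinarith)]
      nlinarith [mul_nonneg hu0 (mul_nonneg (sq_nonneg t) (sub_nonneg.2 hx3))]
    calc (1 - x * t) * exp (-XX x (-t) ^ 2 / 2)
        = (1 - x * t) * exp (2 * (x * t) / (1 - t ^ 2)) * exp (-XX x t ^ 2 / 2) := by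
          rw [neg_sq_XX_neg_div_two x ht, exp_add]
          ring
      _ ≤ (1 + x * t) * exp (-XX x t ^ 2 / 2) := by
          gcongr
          exact one_sub_mul_exp_le_one_add hu0 hu1 hexp

lemma hasDerivAt_gaussPhi_XX_neg_add (x : ℝ) {t : ℝ} (ht : t ∈ Ioo (-1 : ℝ) 1) :
    HasDerivAt (fun s => gaussPhi (XX x (-s)) + gaussPhi (XX x s))
      (((1 - x * t) * exp (-XX x (-t) ^ 2 / 2) - (1 + x * t) * exp (-XX x t ^ 2 / 2)) /
        √(1 - t ^ 2) ^ 3) t := by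
  have hneg : -t ∈ Ioo (-1 : ℝ) 1 := ⟨by linarith [ht.2], by linarith [ht.1]⟩
  have h₁ := (hasDerivAt_gaussPhi _).comp t ((hasDerivAt_XX x hneg).comp t (hasDerivAt_neg t))
  have h₂ := (hasDerivAt_gaussPhi _).comp t (hasDerivAt_XX x ht)
  refine (h₁.add h₂).congr_deriv ?_
  simp only [Function.comp_apply, neg_sq]
  ring

lemma antitoneOn_gaussPhi_XX_neg_add {x : ℝ} (hx : √3 ≤ x) :
    AntitoneOn (fun t => gaussPhi (XX x (-t)) + gaussPhi (XX x t)) (Ico 0 1) := by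
  have hderiv : ∀ t ∈ Ico (0 : ℝ) 1, HasDerivAt _ _ t := fun t ht =>
    hasDerivAt_gaussPhi_XX_neg_add x ⟨by linarith [ht.1], ht.2⟩
  refine antitoneOn_of_hasDerivWithinAt_nonpos (convex_Ico 0 1)
    (fun t ht => (hderiv t ht).continuousAt.continuousWithinAt)
    (fun t ht => (hderiv t (interior_subset ht)).hasDerivWithinAt) ?_
  rw [interior_Ico]
  exact fun t ht => div_nonpos_of_nonpos_of_nonneg
    (sub_nonpos.2 (one_sub_mul_exp_XX_neg_le hx ht.1.le ht.2)) (by positivity)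

theorem gaussPhi_bellman_inequality :
    ∀ x : ℝ, Real.sqrt 3 ≤ x → ∀ τ ∈ Set.Ioo (-1 : ℝ) 1,
      (gaussPhi (XX x (-τ)) + gaussPhi (XX x τ)) / 2 ≤ gaussPhi x := by
  intro x hx τ hτ
  have key := antitoneOn_gaussPhi_XX_neg_add hx ⟨le_rfl, one_pos⟩
    ⟨abs_nonneg τ, abs_lt.2 hτ⟩ (abs_nonneg τ)
  simp only [neg_zero, XX_zero] at key
  rcases abs_choice τ with h | h <;> rw [h] at key
  · linarith
  · rw [neg_neg] at key
    linarith
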